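/- For every path p = (i, s) and every n ≥ 1, |X_{n+1}(p) − X_n(p)| = Φ(p̂^{n+1}) / 2, where p̂^{n+1} := (i, [s 0, …, s (n−2), ¬ s (n−1)]) is the sibling of p^{n+1}; consequently (X_n(p))_{n ≥ 1} is a Cauchy sequence and converges to a limit X_∞(p). -/

import Mathlib

/-!
Write `X_n(p) = Φ(p^n)/2 + A_n`, where `A_n` is the total mass of the edges of `S(n)` lying to
the left of `p^n`. Going from `p^n` to its child `p^{n+1}`, harmonicity replaces every edge to the
left of `p^n` by its two children without changing the mass, so `A_{n+1} = A_n`, plus the mass of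
the left sibling when the path turns right. This gives the increment `±Φ(p̂^{n+1})/2`, and shows
that `X_n(p)` is the midpoint of the nested intervals `[A_n, A_n + Φ(p^n)]`, whose monotone and
bounded endpoints converge.
-/

noncomputable section
open Filter Topology Classical

/-- Lexicographic strict order on positive edges (compared within a sphere `S(n)`). -/
def EdgeLt {N : ℕ} (e f : Fin N × List Bool) : Prop :=
  e.1 < f.1 ∨ (e.1 = f.1 ∧ List.Lex (· < ·) e.2 f.2)

/-- `Y (i, v)` for an edge of `S (m+1)`: `Y_n(e) = Φ(e)/2 + ∑_{f ∈ S(n), f < e} Φ(f)`. -/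
def Y {N : ℕ} (Φ : Fin N → List Bool → ℝ) (m : ℕ) (i : Fin N) (v : Fin m → Bool) : ℝ :=
  Φ i (List.ofFn v) / 2 +
    ∑ x : Fin N × (Fin m → Bool),
      if EdgeLt (x.1, List.ofFn x.2) (i, List.ofFn v) then Φ x.1 (List.ofFn x.2) else 0

/-- `X_n(p) = Y_n(p^n)`; here `m = n - 1` is the word length of the `n`-th edge. -/
def X {N : ℕ} (Φ : Fin N → List Bool → ℝ) (m : ℕ) (p : Fin N × (ℕ → Bool)) : ℝ :=
  Y Φ m p.1 (fun k => p.2 k.val)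

/-- The word `[s 0, …, s (m-1)]` of length `m`. -/
def word (s : ℕ → Bool) (m : ℕ) : List Bool := List.ofFn (fun k : Fin m => s k.val)

theorem List.lex_append_singleton_iff {α : Type*} {r : α → α → Prop} {u v : List α}
    (h : u.length = v.length) (a b : α) :
    List.Lex r (u ++ [a]) (v ++ [b]) ↔ List.Lex r u v ∨ u = v ∧ r a b := by
  induction u generalizing v with
  | nil =>
    cases v with
    | nil => simp [List.lex_singleton_iff]
    | cons => simp at h
  | cons x u ih =>
    cases v with
    | nil => simp at h
    | cons y v =>
      simp only [List.cons_append, List.cons_lex_cons_iff, ih (by simpa using h), List.cons.injEq]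
      tauto

theorem Fintype.sum_prod_snoc {ι α M : Type*} [Fintype ι] [Fintype α] [AddCommMonoid M] {m : ℕ}
    (F : ι × (Fin (m + 1) → α) → M) :
    ∑ x, F x = ∑ y : ι × (Fin m → α), ∑ c, F (y.1, Fin.snoc y.2 c) := by
  simp only [Fintype.sum_prod_type]
  refine Finset.sum_congr rfl fun j _ => ?_
  rw [← (Fin.snocEquiv fun _ => α).sum_comp, Fintype.sum_prod_type, Finset.sum_comm]
  rfl

theorem List.ofFn_snoc {α : Type*} {m : ℕ} (v : Fin m → α) (b : α) :
    List.ofFn (Fin.snoc v b : Fin (m + 1) → α) = List.ofFn v ++ [b] := by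
  simp [List.ofFn_succ_last, -List.ofFn_succ]

section EdgeOrder

variable {N : ℕ}

theorem EdgeLt.irrefl (e : Fin N × List Bool) : ¬ EdgeLt e e := by
  rintro (h | ⟨-, h⟩)
  exacts [lt_irrefl _ h, List.lex_irrefl (fun b => lt_irrefl b) _ h]

theorem edgeLt_append_singleton_iff {i j : Fin N} {u v : List Bool} (h : u.length = v.length)
    (c b : Bool) :
    EdgeLt (j, u ++ [c]) (i, v ++ [b]) ↔ EdgeLt (j, u) (i, v) ∨ j = i ∧ u = v ∧ c < b := by
  simp only [EdgeLt, List.lex_append_singleton_iff h]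
  tauto

end EdgeOrder

section MassBelow

variable {N : ℕ} {M : Type*} [AddCommMonoid M]

def massBelow (Φ : Fin N → List Bool → M) (m : ℕ) (i : Fin N) (v : Fin m → Bool) : M :=
  ∑ x : Fin N × (Fin m → Bool),
    if EdgeLt (x.1, List.ofFn x.2) (i, List.ofFn v) then Φ x.1 (List.ofFn x.2) else 0

variable {Φ : Fin N → List Bool → M}
  (hΦ : ∀ (i : Fin N) (w : List Bool), Φ i w = Φ i (w ++ [false]) + Φ i (w ++ [true]))
include hΦ

theorem sum_children_massBelow_summand (i j : Fin N) {m : ℕ} (u v : Fin m → Bool) (b : Bool) :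
    ∑ c : Bool, (if EdgeLt (j, List.ofFn (Fin.snoc u c : Fin (m + 1) → Bool))
        (i, List.ofFn (Fin.snoc v b : Fin (m + 1) → Bool))
      then Φ j (List.ofFn (Fin.snoc u c : Fin (m + 1) → Bool)) else 0) =
    (if EdgeLt (j, List.ofFn u) (i, List.ofFn v) then Φ j (List.ofFn u) else 0) +
      if (j, u) = (i, v) then (if b then Φ i (List.ofFn v ++ [false]) else 0) else 0 := by
  simp only [List.ofFn_snoc, Fintype.sum_bool,
    edgeLt_append_singleton_iff (by simp : (List.ofFn u).length = (List.ofFn v).length)]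
  by_cases hlt : EdgeLt (j, List.ofFn u) (i, List.ofFn v)
  · have hne : (j, u) ≠ (i, v) := by
      rintro ⟨⟩
      exact EdgeLt.irrefl _ hlt
    simp [hlt, hne, hΦ j (List.ofFn u), add_comm]
  · by_cases heq : (j, u) = (i, v)
    · obtain ⟨⟩ := heq
      cases b <;> simp [hlt]
    · have hc : ∀ c, ¬ (j = i ∧ u = v ∧ c < b) := fun c ⟨hj, hu, _⟩ => heq (by rw [hj, hu])
      simp [hlt, heq, hc]

theorem massBelow_snoc (i : Fin N) {m : ℕ} (v : Fin m → Bool) (b : Bool) :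
    massBelow Φ (m + 1) i (Fin.snoc v b) =
      massBelow Φ m i v + if b then Φ i (List.ofFn v ++ [false]) else 0 := by
  rw [massBelow, Fintype.sum_prod_snoc]
  simp only [sum_children_massBelow_summand hΦ, Finset.sum_add_distrib, Fintype.sum_ite_eq']
  rfl

end MassBelow

section Path

variable {N : ℕ} {Φ : Fin N → List Bool → ℝ} (i : Fin N) (s : ℕ → Bool)

theorem word_succ (m : ℕ) : word s (m + 1) = word s m ++ [s m] := by
  simp [word, List.ofFn_succ_last, -List.ofFn_succ]

theorem X_eq_add_massBelow (m : ℕ) :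
    X Φ m (i, s) = Φ i (word s m) / 2 + massBelow Φ m i (fun k => s k) :=
  rfl

variable (hΦ : ∀ (i : Fin N) (w : List Bool), Φ i w = Φ i (w ++ [false]) + Φ i (w ++ [true]))
include hΦ

theorem massBelow_path_succ (m : ℕ) :
    massBelow Φ (m + 1) i (fun k => s k) =
      massBelow Φ m i (fun k => s k) + if s m then Φ i (word s m ++ [false]) else 0 := by
  rw [← Fin.snoc_init_self (fun k : Fin (m + 1) => s k), massBelow_snoc hΦ]
  rfl

theorem X_succ_sub_X (m : ℕ) :
    X Φ (m + 1) (i, s) - X Φ m (i, s) =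
      if s m then Φ i (word s m ++ [!s m]) / 2 else -(Φ i (word s m ++ [!s m]) / 2) := by
  rw [X_eq_add_massBelow, X_eq_add_massBelow, massBelow_path_succ i s hΦ, word_succ,
    hΦ i (word s m)]
  cases s m <;> simp <;> ring

variable (hnonneg : ∀ (i : Fin N) (w : List Bool), 0 ≤ Φ i w)
include hnonneg

theorem abs_X_succ_sub_X (m : ℕ) :
    |X Φ (m + 1) (i, s) - X Φ m (i, s)| = Φ i (word s m ++ [!s m]) / 2 := by
  rw [X_succ_sub_X i s hΦ]
  have := hnonneg i (word s m ++ [!s m])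
  split_ifs
  · exact abs_of_nonneg (by positivity)
  · rw [abs_neg, abs_of_nonneg (by positivity)]

theorem monotone_massBelow_path : Monotone fun m => massBelow Φ m i (fun k => s k) :=
  monotone_nat_of_le_succ fun m => by
    rw [massBelow_path_succ i s hΦ]
    split_ifs
    exacts [le_add_of_nonneg_right (hnonneg _ _), (add_zero _).ge]

theorem antitone_massBelow_add_path :
    Antitone fun m => massBelow Φ m i (fun k => s k) + Φ i (word s m) :=
  antitone_nat_of_succ_le fun m => by
    rw [massBelow_path_succ i s hΦ, word_succ, hΦ i (word s m)]
    have := hnonneg i (word s m ++ [true])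
    cases s m <;> simp <;> linarith

theorem exists_tendsto_X : ∃ L, Tendsto (fun m => X Φ m (i, s)) atTop (𝓝 L) := by
  set a := fun m => massBelow Φ m i (fun k => s k)
  set b := fun m => a m + Φ i (word s m)
  have ha := monotone_massBelow_path i s hΦ hnonneg
  have hb := antitone_massBelow_add_path i s hΦ hnonneg
  have hab : ∀ m, a m ≤ b m := fun m => le_add_of_nonneg_right (hnonneg _ _)
  have ha_lim := tendsto_atTop_ciSup ha ⟨b 0, by
    rintro _ ⟨m, rfl⟩
    exact (hab m).trans (hb m.zero_le)⟩
  have hb_lim := tendsto_atTop_ciInf hb ⟨a 0, by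
    rintro _ ⟨m, rfl⟩
    exact (ha m.zero_le).trans (hab m)⟩
  have hX : (fun m => X Φ m (i, s)) = fun m => (a m + b m) / 2 := by
    funext m
    rw [X_eq_add_massBelow]
    ring
  exact ⟨_, hX ▸ (ha_lim.add hb_lim).div_const 2⟩

end Path

theorem X_cauchy_converges_general (N : ℕ) (Φ : Fin N → List Bool → ℝ)
    (hpos : ∀ (i : Fin N) (w : List Bool), 0 < Φ i w)
    (hharm : ∀ (i : Fin N) (w : List Bool), Φ i w = Φ i (w ++ [false]) + Φ i (w ++ [true]))
    (i : Fin N) (s : ℕ → Bool) :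
    (∀ m : ℕ, |X Φ (m + 1) (i, s) - X Φ m (i, s)| = Φ i (word s m ++ [!s m]) / 2) ∧
    CauchySeq (fun m => X Φ m (i, s)) ∧
    ∃ L : ℝ, Tendsto (fun m => X Φ m (i, s)) atTop (nhds L) := by
  have hnonneg : ∀ i w, 0 ≤ Φ i w := fun i w => (hpos i w).le
  obtain ⟨L, hL⟩ := exists_tendsto_X i s hharm hnonneg
  exact ⟨abs_X_succ_sub_X i s hharm hnonneg, hL.cauchySeq, L, hL⟩

/-- **Convergence of `X_n`.** For every path `p = (i, s)` and every `n ≥ 1`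
(writing `n = m + 1`), `|X_{n+1}(p) − X_n(p)| = Φ(p̂^{n+1}) / 2`, where
`p̂^{n+1} = (i, [s 0, …, s (n-2), ¬ s (n-1)]) = (i, word s m ++ [!s m])` is the sibling
of `p^{n+1}`; consequently `(X_n(p))` is a Cauchy sequence and converges to a limit. -/
theorem X_cauchy_converges (N : ℕ) (hN : 1 ≤ N) (Φ : Fin N → List Bool → ℝ)
    (hpos : ∀ (i : Fin N) (w : List Bool), 0 < Φ i w)
    (hharm : ∀ (i : Fin N) (w : List Bool), Φ i w = Φ i (w ++ [false]) + Φ i (w ++ [true]))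
    (i : Fin N) (s : ℕ → Bool) :
    (∀ m : ℕ, |X Φ (m + 1) (i, s) - X Φ m (i, s)| = Φ i (word s m ++ [!s m]) / 2) ∧
    CauchySeq (fun m => X Φ m (i, s)) ∧
    ∃ L : ℝ, Tendsto (fun m => X Φ m (i, s)) atTop (nhds L) :=
  X_cauchy_converges_general N Φ hpos hharm i s
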